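/- Any Tait-colorable 4-pole has at least 2 inequivalent states: given any state S of a 4-pole, performing a Kempe interchange along the 2-colored chain starting at the first semiedge produces a state not equivalent to S. Consequently μ(4) = 2, realized by the 4-pole consisting of two free edges. -/
import Mathlib


/-- A (cubic) multipole: finitely many vertices `V`, internal edges `E` (with ordered
endpoints `ends`), semiedges `S` each incident to a vertex via `vinc`, and free edges `F`
(isolated edges consisting of two paired semiedges). -/
structure Multipole where
  V : Type
  E : Type
  S : Type
  F : Type
  [fV : Fintype V]
  [fE : Fintype E]
  [fS : Fintype S]
  [fF : Fintype F]
  ends : E → V × V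
  vinc : S → V

namespace Multipole

variable (M : Multipole)

/-- The incidences ("items") at the vertices of a multipole: edge-ends and semiedges. -/
abbrev Item : Type := (M.E × Bool) ⊕ M.S

/-- The vertex at which an item is incident. -/
def itemAt : M.Item → M.V
  | Sum.inl (e, b) => cond b (M.ends e).2 (M.ends e).1
  | Sum.inr s => M.vinc s

/-- The color of an item under an assignment of colors to edges and semiedges. -/
def itemCol (φE : M.E → Fin 3) (φS : M.S → Fin 3) : M.Item → Fin 3
  | Sum.inl (e, _) => φE e
  | Sum.inr s => φS s

/-- A multipole is cubic when every vertex has exactly 3 incidences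
(edge-ends plus semiedges). -/
def IsCubic : Prop := ∀ v : M.V, Nat.card {i : M.Item // M.itemAt i = v} = 3

/-- A Tait coloring: edges and semiedges are colored with 3 colors so that distinct
incidences at a common vertex receive distinct colors. (A free edge carries a single
color, shared by its two semiedges, and imposes no constraint.) -/
def IsTait (φE : M.E → Fin 3) (φS : M.S → Fin 3) : Prop :=
  ∀ i j : M.Item, i ≠ j → M.itemAt i = M.itemAt j →
    M.itemCol φE φS i ≠ M.itemCol φE φS j

/-- The number of semiedges: each free edge contributes two semiedges. -/
noncomputable def numSemiedges : ℕ := Nat.card M.S + 2 * Nat.card M.F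

end Multipole

namespace Multipole

variable (M : Multipole)

/-- A state of `M`: an assignment of colors to the semiedges (both semiedges of a free
edge getting its single color) induced by some Tait coloring. -/
def IsColState (p : (M.S → Fin 3) × (M.F → Fin 3)) : Prop :=
  ∃ φE : M.E → Fin 3, M.IsTait φE p.1

/-- States are identified up to a permutation of the three colors. -/
def stateSetoid : Setoid {p : (M.S → Fin 3) × (M.F → Fin 3) // M.IsColState p} where
  r p q := ∃ π : Equiv.Perm (Fin 3), q.val.1 = ⇑π ∘ p.val.1 ∧ q.val.2 = ⇑π ∘ p.val.2
  iseqv := by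
    constructor
    · intro p; exact ⟨1, by ext x; simp, by ext x; simp⟩
    · rintro p q ⟨π, h1, h2⟩
      exact ⟨π⁻¹, by rw [h1]; ext x; simp, by rw [h2]; ext x; simp⟩
    · rintro p q r ⟨π, h1, h2⟩ ⟨π', h1', h2'⟩
      exact ⟨π' * π, by rw [h1', h1]; ext x; simp, by rw [h2', h2]; ext x; simp⟩

/-- The number of states of `M`, counted up to permutation of the three colors. -/
noncomputable def numStates : ℕ := Nat.card (Quotient M.stateSetoid)

/-- `M` admits a Tait coloring. -/
def TaitColorable : Prop := ∃ φE φS, M.IsTait φE φS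

end Multipole

namespace Multipole

instance (M : Multipole) : Fintype M.V := M.fV
instance (M : Multipole) : Fintype M.E := M.fE
instance (M : Multipole) : Fintype M.S := M.fS
instance (M : Multipole) : Fintype M.F := M.fF

/-- the "other" color among `{a,b}`. -/
def otherab (a b x : Fin 3) : Fin 3 := if x = a then b else a

lemma otherab_mem (a b x : Fin 3) : otherab a b x = a ∨ otherab a b x = b := by
  unfold otherab; split
  · exact Or.inr rfl
  · exact Or.inl rfl

lemma otherab_ne {a b : Fin 3} (hab : a ≠ b) (x : Fin 3) : otherab a b x ≠ x := by
  unfold otherab; split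
  · rename_i h; rw [h]; exact hab.symm
  · rename_i h; exact fun hh => h hh.symm

lemma otherab_otherab {a b x : Fin 3} (hab : a ≠ b) (h : x = a ∨ x = b) :
    otherab a b (otherab a b x) = x := by
  rcases h with h | h <;> subst h <;> simp [otherab, hab, hab.symm]

lemma otherab_eq_of_ne {a b x y : Fin 3} (hab : a ≠ b) (hx : x = a ∨ x = b)
    (hy : y = a ∨ y = b) (hxy : y ≠ x) : y = otherab a b x := by
  unfold otherab
  rcases hx with rfl | rfl <;> rcases hy with rfl | rfl <;>
    simp_all [hab, hab.symm, Ne.symm]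

section Kempe

variable (M : Multipole) (φE : M.E → Fin 3) (φS : M.S → Fin 3)

lemma existsUnique_item (hcub : M.IsCubic) (ht : M.IsTait φE φS) (v : M.V) (x : Fin 3) :
    ∃! i : M.Item, M.itemAt i = v ∧ M.itemCol φE φS i = x := by
  classical
  have hcard : Fintype.card {i : M.Item // M.itemAt i = v} = 3 := by
    have := hcub v; rwa [Nat.card_eq_fintype_card] at this
  set f : {i : M.Item // M.itemAt i = v} → Fin 3 := fun i => M.itemCol φE φS i.val with hf
  have hinj : Function.Injective f := by
    intro i j hij
    by_contra hne
    exact ht i.val j.val (fun h => hne (Subtype.ext h)) (i.2.trans j.2.symm) hij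
  have hbij : Function.Bijective f :=
    (Fintype.bijective_iff_injective_and_card f).2 ⟨hinj, by simp [hcard]⟩
  obtain ⟨i, hi⟩ := hbij.2 x
  refine ⟨i.val, ⟨i.2, hi⟩, ?_⟩
  rintro j ⟨hj1, hj2⟩
  have : (⟨j, hj1⟩ : {i : M.Item // M.itemAt i = v}) = i := hinj (by simpa [hf] using hj2.trans hi.symm)
  exact congrArg Subtype.val this

variable (hcub : M.IsCubic) (ht : M.IsTait φE φS) (a b : Fin 3)

/-- the unique other item at the same vertex with the "other" color. -/
noncomputable def mu (i : M.Item) : M.Item :=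
  (M.existsUnique_item φE φS hcub ht (M.itemAt i)
    (otherab a b (M.itemCol φE φS i))).exists.choose

lemma mu_spec (i : M.Item) :
    M.itemAt (M.mu φE φS hcub ht a b i) = M.itemAt i ∧
      M.itemCol φE φS (M.mu φE φS hcub ht a b i) = otherab a b (M.itemCol φE φS i) :=
  (M.existsUnique_item φE φS hcub ht (M.itemAt i)
    (otherab a b (M.itemCol φE φS i))).exists.choose_spec

lemma eq_mu (i j : M.Item) (h1 : M.itemAt j = M.itemAt i)
    (h2 : M.itemCol φE φS j = otherab a b (M.itemCol φE φS i)) :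
    j = M.mu φE φS hcub ht a b i :=
  (M.existsUnique_item φE φS hcub ht (M.itemAt i)
    (otherab a b (M.itemCol φE φS i))).unique ⟨h1, h2⟩ (M.mu_spec φE φS hcub ht a b i)

lemma mu_ne (hab : a ≠ b) (i : M.Item) : M.mu φE φS hcub ht a b i ≠ i := by
  intro h
  have := (M.mu_spec φE φS hcub ht a b i).2
  rw [h] at this
  exact otherab_ne hab _ this.symm

lemma mu_mu (hab : a ≠ b) (i : M.Item)
    (hi : M.itemCol φE φS i = a ∨ M.itemCol φE φS i = b) :
    M.mu φE φS hcub ht a b (M.mu φE φS hcub ht a b i) = i := by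
  have h := M.mu_spec φE φS hcub ht a b i
  exact (M.eq_mu φE φS hcub ht a b _ i h.1.symm
    (by rw [h.2, otherab_otherab hab hi])).symm

lemma mu_inj (hab : a ≠ b) (i j : M.Item)
    (hi : M.itemCol φE φS i = a ∨ M.itemCol φE φS i = b)
    (hj : M.itemCol φE φS j = a ∨ M.itemCol φE φS j = b)
    (h : M.mu φE φS hcub ht a b i = M.mu φE φS hcub ht a b j) : i = j := by
  rw [← M.mu_mu φE φS hcub ht a b hab i hi, h, M.mu_mu φE φS hcub ht a b hab j hj]

end Kempe

/-- flip to the other end of an edge; identity on semiedges. -/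
def eps (M : Multipole) : M.Item → M.Item
  | Sum.inl (e, bb) => Sum.inl (e, !bb)
  | Sum.inr s => Sum.inr s

lemma eps_eps (M : Multipole) (i : M.Item) : M.eps (M.eps i) = i := by
  rcases i with ⟨e, bb⟩ | s <;> simp [eps]

lemma itemCol_eps (M : Multipole) (φE : M.E → Fin 3) (φS : M.S → Fin 3) (i : M.Item) :
    M.itemCol φE φS (M.eps i) = M.itemCol φE φS i := by
  rcases i with ⟨e, bb⟩ | s <;> rfl

lemma eps_isLeft (M : Multipole) (i : M.Item) (h : i.isLeft) : (M.eps i).isLeft := by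
  rcases i with ⟨e, bb⟩ | s
  · rfl
  · simp at h

end Multipole

namespace Multipole

section Chain

variable (M : Multipole) (φE : M.E → Fin 3) (φS : M.S → Fin 3)
variable (hcub : M.IsCubic) (ht : M.IsTait φE φS) (a b : Fin 3)

/-- one step of the Kempe chain -/
noncomputable def chainStep (i : M.Item) : M.Item :=
  match i with
  | Sum.inl x => M.mu φE φS hcub ht a b (M.eps (Sum.inl x))
  | Sum.inr s => Sum.inr s

/-- the Kempe chain starting at semiedge `s₁` -/
noncomputable def chain (s₁ : M.S) (n : ℕ) : M.Item :=
  (M.chainStep φE φS hcub ht a b)^[n] (M.mu φE φS hcub ht a b (Sum.inr s₁))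

lemma chain_zero (s₁ : M.S) :
    M.chain φE φS hcub ht a b s₁ 0 = M.mu φE φS hcub ht a b (Sum.inr s₁) := rfl

lemma chain_succ (s₁ : M.S) (n : ℕ) :
    M.chain φE φS hcub ht a b s₁ (n + 1) =
      M.chainStep φE φS hcub ht a b (M.chain φE φS hcub ht a b s₁ n) :=
  Function.iterate_succ_apply' _ _ _

lemma chain_succ_of_left (s₁ : M.S) (n : ℕ) (x : M.E × Bool)
    (h : M.chain φE φS hcub ht a b s₁ n = Sum.inl x) :
    M.chain φE φS hcub ht a b s₁ (n + 1) =
      M.mu φE φS hcub ht a b (M.eps (M.chain φE φS hcub ht a b s₁ n)) := by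
  rw [chain_succ, h]; rfl

lemma chain_succ_of_right (s₁ : M.S) (n : ℕ) (s : M.S)
    (h : M.chain φE φS hcub ht a b s₁ n = Sum.inr s) :
    M.chain φE φS hcub ht a b s₁ (n + 1) = M.chain φE φS hcub ht a b s₁ n := by
  rw [chain_succ, h]; rfl

/-- every chain item is colored `a` or `b`. -/
lemma chain_ab (s₁ : M.S) (hs₁ : φS s₁ = a) (n : ℕ) :
    M.itemCol φE φS (M.chain φE φS hcub ht a b s₁ n) = a ∨
      M.itemCol φE φS (M.chain φE φS hcub ht a b s₁ n) = b := by
  induction n with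
  | zero =>
    rw [chain_zero, (M.mu_spec φE φS hcub ht a b _).2]
    exact otherab_mem _ _ _
  | succ n ih =>
    rcases hc : M.chain φE φS hcub ht a b s₁ n with x | s
    · rw [M.chain_succ_of_left φE φS hcub ht a b s₁ n x hc,
        (M.mu_spec φE φS hcub ht a b _).2]
      exact otherab_mem _ _ _
    · rw [M.chain_succ_of_right φE φS hcub ht a b s₁ n s hc]
      exact ih

/-- the chain eventually reaches a semiedge. -/
lemma chain_reaches (hab : a ≠ b) (s₁ : M.S) (hs₁ : φS s₁ = a) :
    ∃ n s, M.chain φE φS hcub ht a b s₁ n = Sum.inr s := by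
  by_contra hno
  push_neg at hno
  have hleft : ∀ n, ∃ x, M.chain φE φS hcub ht a b s₁ n = Sum.inl x := by
    intro n
    rcases hc : M.chain φE φS hcub ht a b s₁ n with x | s
    · exact ⟨x, rfl⟩
    · exact absurd hc (hno n s)
  have habn : ∀ n, M.itemCol φE φS (M.chain φE φS hcub ht a b s₁ n) = a ∨
      M.itemCol φE φS (M.chain φE φS hcub ht a b s₁ n) = b :=
    M.chain_ab φE φS hcub ht a b s₁ hs₁
  have habeps : ∀ n, M.itemCol φE φS (M.eps (M.chain φE φS hcub ht a b s₁ n)) = a ∨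
      M.itemCol φE φS (M.eps (M.chain φE φS hcub ht a b s₁ n)) = b := by
    intro n; rw [M.itemCol_eps]; exact habn n
  have key : ∀ q p, p < q →
      M.chain φE φS hcub ht a b s₁ p ≠ M.chain φE φS hcub ht a b s₁ q := by
    intro q
    induction q with
    | zero => omega
    | succ q ih =>
      intro p hp hEq
      obtain ⟨xq, hxq⟩ := hleft q
      rw [M.chain_succ_of_left φE φS hcub ht a b s₁ q xq hxq] at hEq
      rcases p with _ | p
      · rw [chain_zero] at hEq
        have := M.mu_inj φE φS hcub ht a b hab _ _
          (Or.inl hs₁ : M.itemCol φE φS (Sum.inr s₁ : M.Item) = a ∨ _ = b) (habeps q) hEq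
        rw [hxq] at this
        simp [eps] at this
      · obtain ⟨xp, hxp⟩ := hleft p
        rw [M.chain_succ_of_left φE φS hcub ht a b s₁ p xp hxp] at hEq
        have := M.mu_inj φE φS hcub ht a b hab _ _ (habeps p) (habeps q) hEq
        have h2 : M.chain φE φS hcub ht a b s₁ p = M.chain φE φS hcub ht a b s₁ q := by
          rw [← M.eps_eps (M.chain φE φS hcub ht a b s₁ p), this, M.eps_eps]
        exact ih p (by omega) h2
  obtain ⟨p, q, hpq, hEq⟩ :=
    Finite.exists_ne_map_eq_of_infinite (M.chain φE φS hcub ht a b s₁)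
  rcases lt_or_gt_of_ne hpq with h | h
  · exact key q p h hEq
  · exact key p q h hEq.symm

end Chain

end Multipole

namespace Multipole

/-- Kempe interchange: starting from a Tait coloring with `φS s₁ = a`, swapping colors
`a, b` along the Kempe chain starting at `s₁` yields a new Tait coloring whose
semiedge-coloring agrees with `φS` away from `s₁` and one other semiedge `t`, and
gives `s₁` the color `b`. -/
lemma kempe (M : Multipole) (φE : M.E → Fin 3) (φS : M.S → Fin 3)
    (hcub : M.IsCubic) (ht : M.IsTait φE φS) (s₁ : M.S) (a b : Fin 3)
    (hab : a ≠ b) (ha : φS s₁ = a) :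
    ∃ φE' φS', M.IsTait φE' φS' ∧ φS' s₁ = b ∧
      ∃ t : M.S, ∀ s, s ≠ s₁ → s ≠ t → φS' s = φS s := by
  classical
  set ch := M.chain φE φS hcub ht a b s₁ with hch
  set μ := M.mu φE φS hcub ht a b with hμ
  set col := M.itemCol φE φS with hcol
  have hreach := M.chain_reaches φE φS hcub ht a b hab s₁ ha
  have hP : ∃ n, ∃ s, ch n = Sum.inr s := hreach
  set N := Nat.find hP with hN
  obtain ⟨t, hNt⟩ : ∃ s, ch N = Sum.inr s := Nat.find_spec hP
  have hmin : ∀ m, m < N → ∀ s, ch m ≠ Sum.inr s := by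
    intro m hm s hcontra
    exact Nat.find_min hP hm ⟨s, hcontra⟩
  have hleft : ∀ m, m < N → ∃ x, ch m = Sum.inl x := by
    intro m hm
    rcases hc : ch m with x | s
    · exact ⟨x, rfl⟩
    · exact absurd hc (hmin m hm s)
  -- the chain set
  set C : Set M.Item := {i | i = Sum.inr s₁ ∨ (∃ m ≤ N, i = ch m) ∨
    ∃ m < N, i = M.eps (ch m)} with hC
  have hs₁C : (Sum.inr s₁ : M.Item) ∈ C := Or.inl rfl
  have hchC : ∀ m, m ≤ N → ch m ∈ C := fun m hm => Or.inr (Or.inl ⟨m, hm, rfl⟩)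
  have hepsC : ∀ m, m < N → M.eps (ch m) ∈ C := fun m hm => Or.inr (Or.inr ⟨m, hm, rfl⟩)
  -- all items in C are colored a or b
  have hchab : ∀ n, col (ch n) = a ∨ col (ch n) = b :=
    M.chain_ab φE φS hcub ht a b s₁ ha
  have hCab : ∀ i ∈ C, col i = a ∨ col i = b := by
    rintro i (rfl | ⟨m, hm, rfl⟩ | ⟨m, hm, rfl⟩)
    · exact Or.inl ha
    · exact hchab m
    · rw [hcol, M.itemCol_eps]; exact hchab m
  -- C is closed under μ
  have hCmu : ∀ i ∈ C, μ i ∈ C := by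
    rintro i (rfl | ⟨m, hm, rfl⟩ | ⟨m, hm, rfl⟩)
    · exact hchC 0 (Nat.zero_le N)
    · rcases m with _ | m
      · rw [hμ, show ch 0 = M.mu φE φS hcub ht a b (Sum.inr s₁) from rfl,
          M.mu_mu φE φS hcub ht a b hab _ (Or.inl (show M.itemCol φE φS (Sum.inr s₁) = a from ha))]
        exact hs₁C
      · obtain ⟨x, hx⟩ := hleft m (by omega)
        rw [hμ, show ch (m+1) = _ from M.chain_succ_of_left φE φS hcub ht a b s₁ m x hx,
          M.mu_mu φE φS hcub ht a b hab _ (by rw [M.itemCol_eps]; exact hchab m)]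
        exact hepsC m (by omega)
    · obtain ⟨x, hx⟩ := hleft m hm
      rw [hμ, ← M.chain_succ_of_left φE φS hcub ht a b s₁ m x hx]
      exact hchC (m+1) (by omega)
  -- C is closed under eps
  have hCeps : ∀ i ∈ C, M.eps i ∈ C := by
    rintro i (rfl | ⟨m, hm, rfl⟩ | ⟨m, hm, rfl⟩)
    · exact hs₁C
    · rcases Nat.lt_or_ge m N with h | h
      · exact hepsC m h
      · have : m = N := le_antisymm hm h
        subst this
        rw [hNt]
        show (Sum.inr t : M.Item) ∈ C
        rw [← hNt]
        exact hchC N le_rfl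
    · rw [M.eps_eps]; exact hchC m (by omega)
  -- semiedges in C are s₁ or t
  have hCsemi : ∀ s : M.S, (Sum.inr s : M.Item) ∈ C → s = s₁ ∨ s = t := by
    rintro s (h | ⟨m, hm, h⟩ | ⟨m, hm, h⟩)
    · exact Or.inl (by injection h)
    · rcases Nat.lt_or_ge m N with h' | h'
      · obtain ⟨x, hx⟩ := hleft m h'
        rw [hx] at h; cases h
      · have : m = N := le_antisymm hm h'
        subst this
        rw [hNt] at h
        exact Or.inr (by injection h)
    · obtain ⟨x, hx⟩ := hleft m hm
      rw [hx] at h; cases h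
  -- the swapped coloring
  set σ := Equiv.swap a b with hσ
  set φE' : M.E → Fin 3 := fun e => if (Sum.inl (e, false) : M.Item) ∈ C then σ (φE e) else φE e
    with hφE'
  set φS' : M.S → Fin 3 := fun s => if (Sum.inr s : M.Item) ∈ C then σ (φS s) else φS s
    with hφS'
  have hedge : ∀ (e : M.E) (bb : Bool),
      ((Sum.inl (e, bb) : M.Item) ∈ C) ↔ (Sum.inl (e, false) : M.Item) ∈ C := by
    intro e bb
    cases bb
    · exact Iff.rfl
    · constructor
      · intro h
        have := hCeps _ h
        simpa [eps] using this
      · intro h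
        have := hCeps _ h
        simpa [eps] using this
  have hcol' : ∀ i : M.Item,
      M.itemCol φE' φS' i = if i ∈ C then σ (col i) else col i := by
    intro i
    rcases i with ⟨e, bb⟩ | s
    · show φE' e = _
      rw [hφE']
      simp only []
      rw [if_congr (hedge e bb).symm rfl rfl]
      rfl
    · rfl
  -- the new coloring is Tait
  have htait' : M.IsTait φE' φS' := by
    have main : ∀ i j : M.Item, i ∈ C → j ∉ C → i ≠ j → M.itemAt i = M.itemAt j →
        M.itemCol φE' φS' i ≠ M.itemCol φE' φS' j := by
      intro i j hiC hjC hne hat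
      rw [hcol' i, hcol' j, if_pos hiC, if_neg hjC]
      by_cases hjab : col j = a ∨ col j = b
      · exfalso
        apply hjC
        have hji : col j = otherab a b (col i) :=
          otherab_eq_of_ne hab (hCab i hiC) hjab (ht i j hne hat).symm
        have : j = μ i := M.eq_mu φE φS hcub ht a b i j hat.symm hji
        rw [this]
        exact hCmu i hiC
      · intro hcontra
        apply hjab
        rw [← hcontra]
        rcases hCab i hiC with h | h <;> rw [h]
        · rw [hσ, Equiv.swap_apply_left]; exact Or.inr rfl
        · rw [hσ, Equiv.swap_apply_right]; exact Or.inl rfl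
    intro i j hne hat
    by_cases hiC : i ∈ C <;> by_cases hjC : j ∈ C
    · rw [hcol' i, hcol' j, if_pos hiC, if_pos hjC]
      exact fun h => ht i j hne hat (σ.injective h)
    · exact main i j hiC hjC hne hat
    · exact fun h => main j i hjC hiC hne.symm hat.symm h.symm
    · rw [hcol' i, hcol' j, if_neg hiC, if_neg hjC]
      exact ht i j hne hat
  refine ⟨φE', φS', htait', ?_, t, ?_⟩
  · rw [hφS']
    simp only []
    rw [if_pos hs₁C, ha, hσ, Equiv.swap_apply_left]
  · intro s hss₁ hst
    have : (Sum.inr s : M.Item) ∉ C := by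
      intro h
      rcases hCsemi s h with h' | h'
      · exact hss₁ h'
      · exact hst h'
    rw [hφS']
    simp only []
    rw [if_neg this]

end Multipole

namespace Multipole

lemma two_le_numStates (M : Multipole)
    (p q : {p : (M.S → Fin 3) × (M.F → Fin 3) // M.IsColState p})
    (h : ¬ ∃ π : Equiv.Perm (Fin 3), q.val.1 = ⇑π ∘ p.val.1 ∧ q.val.2 = ⇑π ∘ p.val.2) :
    2 ≤ M.numStates := by
  classical
  rw [numStates]
  haveI : Finite {p : (M.S → Fin 3) × (M.F → Fin 3) // M.IsColState p} := Subtype.finite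
  haveI : Finite (Quotient M.stateSetoid) := Quotient.finite _
  haveI : Fintype (Quotient M.stateSetoid) := Fintype.ofFinite _
  rw [Nat.card_eq_fintype_card]
  have hnt : Nontrivial (Quotient M.stateSetoid) := by
    refine ⟨Quotient.mk M.stateSetoid p, Quotient.mk M.stateSetoid q, ?_⟩
    intro hEq
    exact h (Quotient.exact hEq)
  exact Fintype.one_lt_card_iff_nontrivial.2 hnt

end Multipole

/-- Any Tait-colorable cubic 4-pole has at least 2 inequivalent states; consequently
`μ(4) = 2`, the minimum being realized by the 4-pole consisting of two free edges
(which has exactly 2 states). -/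
theorem fourpole_at_least_two_states :
    (∀ M : Multipole, M.IsCubic → M.numSemiedges = 4 → M.TaitColorable →
      2 ≤ M.numStates) ∧
    (∀ M : Multipole, IsEmpty M.V → Nat.card M.F = 2 → M.numStates = 2) := by
  constructor
  · intro M hcub hcard htc
    obtain ⟨φE, φS, ht⟩ := htc
    classical
    rw [Multipole.numSemiedges] at hcard
    have hcases : (Nat.card M.S = 4 ∧ Nat.card M.F = 0) ∨
        (Nat.card M.S = 2 ∧ Nat.card M.F = 1) ∨
        (Nat.card M.S = 0 ∧ Nat.card M.F = 2) := by omega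
    rcases hcases with ⟨hS, hF⟩ | ⟨hS, hF⟩ | ⟨hS, hF⟩
    · -- |S| = 4 : the Kempe chain case
      have hS4 : Fintype.card M.S = 4 := by rwa [Nat.card_eq_fintype_card] at hS
      haveI hne : Nonempty M.S := by
        rcases isEmpty_or_nonempty M.S with he | hn
        · rw [Nat.card_of_isEmpty] at hS; omega
        · exact hn
      have hex : ∀ x y : M.S, ∃ z, z ≠ x ∧ z ≠ y := by
        intro x y
        by_contra hco
        push_neg at hco
        have hsub : (Finset.univ : Finset M.S) ⊆ {x, y} := by
          intro z _
          rcases eq_or_ne z x with h' | h'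
          · simp [h']
          · simp [hco z h']
        have h1 := Finset.card_le_card hsub
        have h2 : ({x, y} : Finset M.S).card ≤ 2 :=
          (Finset.card_insert_le _ _).trans (by simp)
        rw [Finset.card_univ, hS4] at h1
        omega
      obtain ⟨s₀⟩ := hne
      by_cases hconst : ∀ s, φS s = φS s₀
      · -- constant state
        obtain ⟨b, hb⟩ : ∃ b : Fin 3, b ≠ φS s₀ := exists_ne (φS s₀)
        obtain ⟨φE', φS', ht', hs₁b, t, hrest⟩ :=
          M.kempe φE φS hcub ht s₀ (φS s₀) b (Ne.symm hb) rfl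
        refine M.two_le_numStates ⟨(φS, fun _ => 0), ⟨φE, ht⟩⟩
          ⟨(φS', fun _ => 0), ⟨φE', ht'⟩⟩ ?_
        rintro ⟨π, h1, -⟩
        obtain ⟨s₂, hs₂1, hs₂2⟩ := hex s₀ t
        have e1 : φS' s₀ = π (φS s₀) := congrFun h1 s₀
        have e2 : φS' s₂ = π (φS s₂) := congrFun h1 s₂
        rw [hrest s₂ hs₂1 hs₂2, hconst s₂] at e2
        rw [hs₁b] at e1
        rw [← e1] at e2
        exact hb e2.symm
      · -- non-constant state
        push_neg at hconst
        obtain ⟨v, hv⟩ := hconst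
        obtain ⟨x, y, hxy, hfxy⟩ :=
          Fintype.exists_ne_map_eq_of_card_lt φS (by simp [hS4])
        obtain ⟨w, hw⟩ : ∃ w, φS w ≠ φS x := by
          rcases eq_or_ne (φS v) (φS x) with h | h
          · exact ⟨s₀, fun hh => hv (h.trans hh.symm)⟩
          · exact ⟨v, h⟩
        have hab : φS x ≠ φS w := Ne.symm hw
        obtain ⟨φE', φS', ht', hs₁b, t, hrest⟩ :=
          M.kempe φE φS hcub ht x (φS x) (φS w) hab rfl
        refine M.two_le_numStates ⟨(φS, fun _ => 0), ⟨φE, ht⟩⟩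
          ⟨(φS', fun _ => 0), ⟨φE', ht'⟩⟩ ?_
        rintro ⟨π, h1, -⟩
        have eb : φS w = π (φS x) := by
          have h : φS' x = π (φS x) := congrFun h1 x
          rwa [hs₁b] at h
        by_cases hwt : w = t
        · -- w is the chain end; use the duplicated color at y
          by_cases hyt : y = t
          · exact hw (by rw [hwt, ← hyt, ← hfxy])
          · have hyx : y ≠ x := hxy.symm
            have h : φS' y = π (φS y) := congrFun h1 y
            rw [hrest y hyx hyt, ← hfxy] at h
            rw [← h] at eb
            exact hab eb.symm
        · have hwx : w ≠ x := fun hh => hw (by rw [hh])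
          have h : φS' w = π (φS w) := congrFun h1 w
          rw [hrest w hwx hwt] at h
          rw [eb] at h
          have h' : φS x = π (φS x) := π.injective h
          exact hw (eb.trans h'.symm)
    · -- |S| = 2, |F| = 1 : vary the free edge color
      have hS2 : Fintype.card M.S = 2 := by rwa [Nat.card_eq_fintype_card] at hS
      have hF1 : Fintype.card M.F = 1 := by rwa [Nat.card_eq_fintype_card] at hF
      haveI : Nonempty M.S := by
        rcases isEmpty_or_nonempty M.S with he | hn
        · rw [Nat.card_of_isEmpty] at hS; omega
        · exact hn
      haveI : Nonempty M.F := by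
        rcases isEmpty_or_nonempty M.F with he | hn
        · rw [Nat.card_of_isEmpty] at hF; omega
        · exact hn
      set x := Classical.arbitrary M.S
      obtain ⟨d, hd⟩ : ∃ d : Fin 3, d ≠ φS x := exists_ne (φS x)
      refine M.two_le_numStates ⟨(φS, fun _ => φS x), ⟨φE, ht⟩⟩
        ⟨(φS, fun _ => d), ⟨φE, ht⟩⟩ ?_
      rintro ⟨π, h1, h2⟩
      have e1 : φS x = π (φS x) := congrFun h1 x
      have e2 : d = π (φS x) := congrFun h2 (Classical.arbitrary M.F)
      exact hd (e2.trans e1.symm)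
    · -- |S| = 0, |F| = 2
      have hF2 : Fintype.card M.F = 2 := by rwa [Nat.card_eq_fintype_card] at hF
      obtain ⟨f₀, f₁, hne⟩ := (Fintype.one_lt_card_iff_nontrivial (α := M.F)).1 (by omega)
      refine M.two_le_numStates ⟨(φS, fun _ => 0), ⟨φE, ht⟩⟩
        ⟨(φS, fun f => if f = f₀ then 0 else 1), ⟨φE, ht⟩⟩ ?_
      rintro ⟨π, -, h2⟩
      have e0 : (if f₀ = f₀ then (0 : Fin 3) else 1) = π 0 := congrFun h2 f₀
      have e1 : (if f₁ = f₀ then (0 : Fin 3) else 1) = π 0 := congrFun h2 f₁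
      rw [if_pos rfl] at e0
      rw [if_neg hne.symm] at e1
      have : (1 : Fin 3) = 0 := e1.trans e0.symm
      simp at this
  · -- the two-free-edge 4-pole has exactly 2 states
    intro M hV hF
    classical
    haveI hSe : IsEmpty M.S := ⟨fun s => hV.false (M.vinc s)⟩
    haveI hEe : IsEmpty M.E := ⟨fun e => hV.false (M.ends e).1⟩
    have hstate : ∀ p : (M.S → Fin 3) × (M.F → Fin 3), M.IsColState p :=
      fun p => ⟨fun e => isEmptyElim e, fun i j _ _ => (hV.false (M.itemAt i)).elim⟩
    obtain ⟨f₀, f₁, hne, hcov⟩ := Nat.card_eq_two_iff.1 hF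
    have hcov' : ∀ f : M.F, f = f₀ ∨ f = f₁ := by
      intro f
      have hmem : f ∈ ({f₀, f₁} : Set M.F) := by rw [hcov]; trivial
      simpa using hmem
    have hperm0 : ∀ u : Fin 3, ∃ π : Equiv.Perm (Fin 3), π u = 0 := by decide
    have hperm01 : ∀ u v : Fin 3, u ≠ v →
        ∃ π : Equiv.Perm (Fin 3), π u = 0 ∧ π v = 1 := by decide
    set p0 : {p : (M.S → Fin 3) × (M.F → Fin 3) // M.IsColState p} :=
      ⟨(fun s => isEmptyElim s, fun _ => 0), hstate _⟩ with hp0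
    set p1 : {p : (M.S → Fin 3) × (M.F → Fin 3) // M.IsColState p} :=
      ⟨(fun s => isEmptyElim s, fun f => if f = f₀ then 0 else 1), hstate _⟩ with hp1
    rw [Multipole.numStates, Nat.card_eq_two_iff]
    refine ⟨Quotient.mk M.stateSetoid p0, Quotient.mk M.stateSetoid p1, ?_, ?_⟩
    · intro hEq
      obtain ⟨π, -, h2⟩ := Quotient.exact hEq
      have e0 : (if f₀ = f₀ then (0 : Fin 3) else 1) = π 0 := congrFun h2 f₀
      have e1 : (if f₁ = f₀ then (0 : Fin 3) else 1) = π 0 := congrFun h2 f₁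
      rw [if_pos rfl] at e0
      rw [if_neg hne.symm] at e1
      have : (1 : Fin 3) = 0 := e1.trans e0.symm
      simp at this
    · rw [Set.eq_univ_iff_forall]
      refine Quotient.ind ?_
      rintro ⟨⟨g1, g2⟩, hp⟩
      simp only [Set.mem_insert_iff, Set.mem_singleton_iff]
      by_cases hg : g2 f₁ = g2 f₀
      · -- constant : equivalent to p0
        left
        obtain ⟨π, hπ⟩ := hperm0 (g2 f₀)
        refine Quotient.sound ⟨π, funext fun s => isEmptyElim s, funext fun f => ?_⟩
        show (0 : Fin 3) = π (g2 f)
        rcases hcov' f with h | h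
        · rw [h, hπ]
        · rw [h, hg, hπ]
      · -- non-constant : equivalent to p1
        right
        obtain ⟨π, hπ0, hπ1⟩ := hperm01 (g2 f₀) (g2 f₁) (fun hh => hg hh.symm)
        refine Quotient.sound ⟨π, funext fun s => isEmptyElim s, funext fun f => ?_⟩
        show (if f = f₀ then (0 : Fin 3) else 1) = π (g2 f)
        rcases hcov' f with h | h
        · rw [if_pos h, h, hπ0]
        · rw [if_neg (by rw [h]; exact fun hh => hne hh.symm), h, hπ1]
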